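/- Let R be a commutative ring with unity of characteristic not equal to 2 (so 2 ≠ 0 in R), and let n > 3. Then the quandle ring R[Rₙ] of the dihedral quandle Rₙ is not power-associative; indeed, the element u = a₀ + 2a₁ ∈ R[Rₙ] satisfies (u·u)·u ≠ u·(u·u). -/
import Mathlib


/-!
Statement 19: Let `R` be a commutative ring with unity of characteristic not equal to 2
(so `2 ≠ 0` in `R`) and let `n > 3`. Then the quandle ring `R[Rₙ]` of the dihedral
quandle `Rₙ` is not power-associative; indeed `u = a₀ + 2a₁` satisfies
`(u·u)·u ≠ u·(u·u)`.
-/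

variable {X R : Type*}

/-- Multiplication on the free module `X →₀ R` induced by a binary operation on `X`. -/
noncomputable def qmul [Ring R] (op : X → X → X) (u v : X →₀ R) : X →₀ R :=
  u.sum fun x a => v.sum fun y b => Finsupp.single (op x y) (a * b)

/-- The dihedral quandle operation on `ZMod n`: `aᵢ·aⱼ = a_{2j−i}`. -/
def dihedralOp (n : ℕ) : ZMod n → ZMod n → ZMod n := fun a b => 2 * b - a

lemma qmul_single_single [Ring R] (op : X → X → X) (x y : X) (a b : R) :
    qmul op (Finsupp.single x a) (Finsupp.single y b) =
      Finsupp.single (op x y) (a * b) := by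
  simp [qmul, Finsupp.sum_single_index]

lemma qmul_add_left [Ring R] (op : X → X → X) (u v w : X →₀ R) :
    qmul op (u + v) w = qmul op u w + qmul op v w := by
  classical
  unfold qmul
  rw [Finsupp.sum_add_index] <;> simp [add_mul, Finsupp.single_add, Finsupp.sum_add]

lemma qmul_add_right [Ring R] (op : X → X → X) (u v w : X →₀ R) :
    qmul op u (v + w) = qmul op u v + qmul op u w := by
  classical
  unfold qmul
  rw [← Finsupp.sum_add]
  congr 1; ext x a
  rw [Finsupp.sum_add_index] <;> simp [mul_add, Finsupp.single_add]

lemma zmod_int_ne (n : ℕ) (a b : ℤ) (h : ¬ ((n : ℤ) ∣ b - a)) :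
    (a : ZMod n) ≠ (b : ZMod n) := by
  intro he
  exact h ((ZMod.intCast_eq_intCast_iff _ _ _).1 he).dvd

theorem stmt_19 [CommRing R] (hchar : ringChar R ≠ 2) (h2 : (2 : R) ≠ 0)
    (n : ℕ) (hn : 3 < n) :
    qmul (dihedralOp n)
        (qmul (dihedralOp n)
          (Finsupp.single (0 : ZMod n) (1 : R) + Finsupp.single 1 2)
          (Finsupp.single (0 : ZMod n) (1 : R) + Finsupp.single 1 2))
        (Finsupp.single (0 : ZMod n) (1 : R) + Finsupp.single 1 2) ≠
      qmul (dihedralOp n)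
        (Finsupp.single (0 : ZMod n) (1 : R) + Finsupp.single 1 2)
        (qmul (dihedralOp n)
          (Finsupp.single (0 : ZMod n) (1 : R) + Finsupp.single 1 2)
          (Finsupp.single (0 : ZMod n) (1 : R) + Finsupp.single 1 2)) := by
  intro h
  have key := DFunLike.congr_fun h (1 : ZMod n)
  simp only [qmul_add_left, qmul_add_right, qmul_single_single, dihedralOp,
    Finsupp.add_apply, Finsupp.single_apply] at key
  norm_num at key
  have e01 : (0 : ZMod n) ≠ 1 := by
    simpa using zmod_int_ne n 0 1 (by intro hd; have := Int.le_of_dvd (by norm_num) hd; omega)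
  have e21 : (2 : ZMod n) ≠ 1 := by
    simpa using zmod_int_ne n 2 1 (by intro hd; have := Int.le_of_dvd (by norm_num) (dvd_neg.mpr hd); omega)
  have e31 : (3 : ZMod n) ≠ 1 := by
    simpa using zmod_int_ne n 3 1 (by intro hd; have := Int.le_of_dvd (by norm_num) (dvd_neg.mpr hd); omega)
  have e41 : (4 : ZMod n) ≠ 1 := by
    simpa using zmod_int_ne n 4 1 (by intro hd; have := Int.le_of_dvd (by norm_num) (dvd_neg.mpr hd); omega)
  have em11 : (-1 : ZMod n) ≠ 1 := by
    simpa using zmod_int_ne n (-1) 1 (by intro hd; have := Int.le_of_dvd (by norm_num) hd; omega)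
  have em21 : (-2 : ZMod n) ≠ 1 := by
    simpa using zmod_int_ne n (-2) 1 (by intro hd; have := Int.le_of_dvd (by norm_num) hd; omega)
  simp only [if_neg e01, if_neg e21, if_neg e31, if_neg e41, if_neg em11, if_neg em21] at key
  obtain rfl | hn5 : n = 4 ∨ 5 ≤ n := by omega
  · have em31 : (-3 : ZMod 4) = 1 := by decide
    rw [if_pos em31] at key
    norm_num at key
    exact h2 (by linear_combination -key)
  · have em31 : (-3 : ZMod n) ≠ 1 := by
      simpa using zmod_int_ne n (-3) 1 (by intro hd; have := Int.le_of_dvd (by norm_num) hd; omega)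
    rw [if_neg em31] at key
    norm_num at key
    exact h2 (by linear_combination key)
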